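/- arXiv:1111.6194 — 3 statements merged into one kernel-verified Lean document; each statement's English description precedes it below -/
import Mathlib

section
/- Let A be a unital C*-algebra and T : A → A a unital completely positive linear map. Then the function f ↦ ‖T(f* f) − T(f)* T(f)‖^{1/2} is a seminorm on A, i.e. it is nonnegative, absolutely homogeneous, and satisfies the triangle inequality. -/
open Matrix

/-!
Write `D f = T (f⋆ f) - (T f)⋆ (T f)`. Two-positivity of `T` applied to the positive matrix
`[[f⋆ f, f⋆], [f, 1]]` and compressed by the vector `(1, -T f)` gives the Kadison–Schwarz
inequality `D f ≥ 0`. For real `r, s`, `D` satisfies the parallelogram-type identity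
`r s D (f + g) + D (r f - s g) = (r + s) (r D f + s D g)`, so
`r s D (f + g) ≤ (r + s) (r D f + s D g)` and, by monotonicity of the norm on positive elements,
`r s ‖D (f + g)‖ ≤ (r + s) (r ‖D f‖ + s ‖D g‖)`. Choosing `r ≈ √‖D g‖`, `s ≈ √‖D f‖` yields the
triangle inequality for `√‖D ·‖`.
-/

theorem Real.sqrt_le_sqrt_add_sqrt_of_forall_mul_le {x a b : ℝ} (ha : 0 ≤ a) (hb : 0 ≤ b)
    (h : ∀ r s : ℝ, 0 < r → 0 < s → r * s * x ≤ (r + s) * (r * a + s * b)) :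
    √x ≤ √a + √b := by
  refine le_of_forall_pos_le_add fun ε hε => Real.sqrt_le_iff.2 ⟨by positivity, ?_⟩
  obtain ⟨p, hp, rfl⟩ : ∃ p, 0 ≤ p ∧ a = p ^ 2 := ⟨√a, Real.sqrt_nonneg a, (Real.sq_sqrt ha).symm⟩
  obtain ⟨q, hq, rfl⟩ : ∃ q, 0 ≤ q ∧ b = q ^ 2 := ⟨√b, Real.sqrt_nonneg b, (Real.sq_sqrt hb).symm⟩
  rw [Real.sqrt_sq hp, Real.sqrt_sq hq]
  have hr : 0 < q + ε / 2 := by positivity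
  have hs : 0 < p + ε / 2 := by positivity
  have hweights : (q + ε / 2) * p ^ 2 + (p + ε / 2) * q ^ 2
      ≤ (q + ε / 2) * (p + ε / 2) * (p + q + ε) := by
    nlinarith [mul_nonneg hε.le (mul_nonneg hp hq), mul_nonneg (sq_nonneg ε) (add_nonneg hp hq),
      pow_pos hε 3]
  have := h _ _ hr hs
  nlinarith [mul_pos hr hs]

theorem Matrix.star_dotProduct_conjTranspose_mul_self_mulVec_nonneg {R n : Type*} [Fintype n]
    [Ring R] [StarRing R] [PartialOrder R] [StarOrderedRing R] (C : Matrix n n R) (v : n → R) :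
    0 ≤ star v ⬝ᵥ (Cᴴ * C) *ᵥ v := by
  rw [← mulVec_mulVec, dotProduct_mulVec, ← conjTranspose_conjTranspose C, ← star_mulVec,
    conjTranspose_conjTranspose]
  exact dotProduct_star_self_nonneg _

section SchwarzDefect

variable {A : Type*} [Ring A] [StarRing A]

def schwarzDefect (T : A → A) (f : A) : A := T (star f * f) - star (T f) * T f

theorem schwarzDefect_nonneg [PartialOrder A] [StarOrderedRing A] {T : A → A} (hT1 : T 1 = 1)
    (h2 : ∀ M : Matrix (Fin 2) (Fin 2) A,
      (∃ B : Matrix (Fin 2) (Fin 2) A, M = Bᴴ * B) →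
      ∃ B : Matrix (Fin 2) (Fin 2) A, M.map T = Bᴴ * B)
    (f : A) : 0 ≤ schwarzDefect T f := by
  let M : Matrix (Fin 2) (Fin 2) A := !![star f * f, star f; f, 1]
  obtain ⟨C, hC⟩ := h2 M ⟨!![f, 1; 0, 0], by
    ext i j; fin_cases i <;> fin_cases j <;> simp [M, mul_apply]⟩
  have hTstar : T (star f) = star (T f) := by
    simpa [M, ← hC] using ((isHermitian_conjTranspose_mul_self C).apply 0 1).symm
  have hquad : schwarzDefect T f = star ![1, -T f] ⬝ᵥ (M.map T) *ᵥ ![1, -T f] := by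
    simp only [schwarzDefect, M, dotProduct, mulVec, Pi.star_apply, map_apply, of_apply,
      cons_val', cons_val_fin_one, Fin.sum_univ_two, cons_val_zero, cons_val_one, mul_one,
      mul_neg, star_one, hTstar, one_mul, star_neg, hT1, add_neg_cancel, mul_zero, add_zero]
    noncomm_ring
  rw [hquad, hC]
  exact star_dotProduct_conjTranspose_mul_self_mulVec_nonneg C _

variable [Algebra ℂ A] [StarModule ℂ A]

theorem schwarzDefect_smul (T : A →ₗ[ℂ] A) (c : ℂ) (f : A) :
    schwarzDefect T (c • f) = (c * star c) • schwarzDefect T f := by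
  simp only [schwarzDefect, star_smul, map_smul, smul_mul_assoc, mul_smul_comm, smul_smul,
    smul_sub]

theorem smul_schwarzDefect_add_add_schwarzDefect_sub (T : A →ₗ[ℂ] A) (f g : A) (r s : ℝ) :
    (r * s) • schwarzDefect T (f + g) + schwarzDefect T (r • f - s • g)
      = (r + s) • (r • schwarzDefect T f + s • schwarzDefect T g) := by
  simp only [schwarzDefect, star_add, star_sub, star_smul, star_trivial, add_mul, mul_add,
    sub_mul, mul_sub, smul_mul_assoc, mul_smul_comm, smul_smul, map_add, map_sub,
    LinearMap.map_smul_of_tower, smul_sub, smul_add]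
  match_scalars <;> ring

end SchwarzDefect

theorem mul_norm_schwarzDefect_add_le {A : Type*} [CStarAlgebra A] [PartialOrder A]
    [StarOrderedRing A] {T : A →ₗ[ℂ] A} (hT1 : T 1 = 1)
    (h2 : ∀ M : Matrix (Fin 2) (Fin 2) A,
      (∃ B : Matrix (Fin 2) (Fin 2) A, M = Bᴴ * B) →
      ∃ B : Matrix (Fin 2) (Fin 2) A, M.map T = Bᴴ * B)
    (f g : A) {r s : ℝ} (hr : 0 < r) (hs : 0 < s) :
    r * s * ‖schwarzDefect T (f + g)‖
      ≤ (r + s) * (r * ‖schwarzDefect T f‖ + s * ‖schwarzDefect T g‖) := by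
  have hD := schwarzDefect_nonneg hT1 h2
  have hle : (r * s) • schwarzDefect T (f + g)
      ≤ (r + s) • (r • schwarzDefect T f + s • schwarzDefect T g) := by
    rw [← smul_schwarzDefect_add_add_schwarzDefect_sub]
    exact le_add_of_nonneg_right (hD _)
  calc r * s * ‖schwarzDefect T (f + g)‖ = ‖(r * s) • schwarzDefect T (f + g)‖ := by
        rw [norm_smul, Real.norm_of_nonneg (by positivity)]
    _ ≤ ‖(r + s) • (r • schwarzDefect T f + s • schwarzDefect T g)‖ :=
        CStarAlgebra.norm_le_norm_of_nonneg_of_le (smul_nonneg (by positivity) (hD _)) hle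
    _ ≤ (r + s) * (r * ‖schwarzDefect T f‖ + s * ‖schwarzDefect T g‖) := by
        rw [norm_smul, Real.norm_of_nonneg (by positivity)]
        gcongr
        refine (norm_add_le _ _).trans_eq ?_
        rw [norm_smul, norm_smul, Real.norm_of_nonneg hr.le, Real.norm_of_nonneg hs.le]

/-- For a unital completely positive linear map `T` on a unital C*-algebra `A`,
the function `f ↦ ‖T(f* f) − T(f)* T(f)‖^{1/2}` is a seminorm: nonnegative, absolutely
homogeneous and subadditive. Complete positivity is expressed via the matrix amplifications
`M ↦ M.map T`, positivity of an element of `Mₙ(A)` meaning it is of the form `Bᴴ * B`. -/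
theorem stmt0 {A : Type*} [NormedRing A] [StarRing A] [CStarRing A] [CompleteSpace A]
    [NormedAlgebra ℂ A] [StarModule ℂ A]
    (T : A →ₗ[ℂ] A) (hT1 : T 1 = 1)
    (hCP : ∀ (n : ℕ) (M : Matrix (Fin n) (Fin n) A),
      (∃ B : Matrix (Fin n) (Fin n) A, M = Bᴴ * B) →
      ∃ B : Matrix (Fin n) (Fin n) A, M.map T = Bᴴ * B) :
    (∀ f : A, 0 ≤ Real.sqrt ‖T (star f * f) - star (T f) * T f‖) ∧
    (∀ (c : ℂ) (f : A),
      Real.sqrt ‖T (star (c • f) * (c • f)) - star (T (c • f)) * T (c • f)‖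
        = ‖c‖ * Real.sqrt ‖T (star f * f) - star (T f) * T f‖) ∧
    (∀ f g : A,
      Real.sqrt ‖T (star (f + g) * (f + g)) - star (T (f + g)) * T (f + g)‖
        ≤ Real.sqrt ‖T (star f * f) - star (T f) * T f‖
          + Real.sqrt ‖T (star g * g) - star (T g) * T g‖) := by
  let : CStarAlgebra A := { }
  let := CStarAlgebra.spectralOrder A
  have := CStarAlgebra.spectralOrderedRing A
  refine ⟨fun f => Real.sqrt_nonneg _, fun c f => ?_, fun f g => ?_⟩
  · change √‖schwarzDefect T (c • f)‖ = ‖c‖ * √‖schwarzDefect T f‖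
    rw [schwarzDefect_smul, norm_smul, norm_mul, norm_star, Real.sqrt_mul (by positivity),
      Real.sqrt_mul_self (norm_nonneg c)]
  · exact Real.sqrt_le_sqrt_add_sqrt_of_forall_mul_le (norm_nonneg _) (norm_nonneg _)
      fun r s hr hs => mul_norm_schwarzDefect_add_le hT1 (hCP 2) f g hr hs
end

section
/- Let E be a normed space, C ≥ 0, and g : (0, ∞) → E a function such that ‖g(t) − g(at)‖ ≤ C for every t > 0 and every a with 1 < a ≤ 3/2. Then for every t > 0 and every a > 1, ‖g(t) − g(at)‖ ≤ C · (1 + log_{3/2} a). -/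
/-- if `‖g(t) − g(at)‖ ≤ C` for all `t > 0` and `1 < a ≤ 3/2`, then
`‖g(t) − g(at)‖ ≤ C (1 + log_{3/2} a)` for all `t > 0` and `a > 1`. -/
theorem stmt13 {E : Type*} [NormedAddCommGroup E] (C : ℝ) (hC : 0 ≤ C) (g : ℝ → E)
    (h : ∀ t : ℝ, 0 < t → ∀ a : ℝ, 1 < a → a ≤ 3 / 2 → ‖g t - g (a * t)‖ ≤ C) :
    ∀ t : ℝ, 0 < t → ∀ a : ℝ, 1 < a →
      ‖g t - g (a * t)‖ ≤ C * (1 + Real.log a / Real.log (3 / 2)) := by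
  have key : ∀ n : ℕ, ∀ t : ℝ, 0 < t → ∀ a : ℝ, 1 < a → a ≤ (3/2 : ℝ) ^ (n + 1) →
      ‖g t - g (a * t)‖ ≤ C * (n + 1) := by
    intro n
    induction n with
    | zero =>
      intro t ht a ha1 ha2
      simpa using h t ht a ha1 (by simpa using ha2)
    | succ n ih =>
      intro t ht a ha1 ha2
      by_cases hsmall : a ≤ 3/2
      · calc ‖g t - g (a * t)‖ ≤ C := h t ht a ha1 hsmall
          _ ≤ C * ((n:ℝ) + 1 + 1) := by nlinarith [Nat.cast_nonneg (α := ℝ) n]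
          _ = C * (((n+1 : ℕ):ℝ) + 1) := by push_cast; ring
      · push_neg at hsmall
        have h32 : (1 : ℝ) < 3/2 := by norm_num
        have hb : (1 : ℝ) < a / (3/2) := by
          rw [lt_div_iff₀ (by norm_num)]; linarith
        have hb2 : a / (3/2) ≤ (3/2 : ℝ) ^ (n + 1) := by
          rw [div_le_iff₀ (by norm_num)]
          calc a ≤ (3/2 : ℝ) ^ (n + 1 + 1) := ha2
            _ = (3/2 : ℝ) ^ (n + 1) * (3/2) := by ring
        have ht2 : 0 < (3/2 : ℝ) * t := by linarith
        have heq : a * t = (a / (3/2)) * ((3/2) * t) := by field_simp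
        calc ‖g t - g (a * t)‖
            ≤ ‖g t - g ((3/2) * t)‖ + ‖g ((3/2) * t) - g (a * t)‖ :=
              norm_sub_le_norm_sub_add_norm_sub _ _ _
          _ ≤ C + C * (n + 1) := by
              refine add_le_add (h t ht (3/2) h32 le_rfl) ?_
              rw [heq]
              exact ih ((3/2) * t) ht2 _ hb hb2
          _ = C * (((n+1 : ℕ):ℝ) + 1) := by push_cast; ring
  intro t ht a ha
  have hloga : 0 < Real.log a := Real.log_pos ha
  have hlog32 : 0 < Real.log (3/2 : ℝ) := Real.log_pos (by norm_num)
  set L := Real.log a / Real.log (3/2) with hL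
  have hLpos : 0 < L := div_pos hloga hlog32
  set n := ⌊L⌋₊ with hn
  have hnle : (n : ℝ) ≤ L := Nat.floor_le hLpos.le
  have hlt : L < n + 1 := Nat.lt_floor_add_one L
  have ha2 : a ≤ (3/2 : ℝ) ^ (n + 1) := by
    have hlog : Real.log a < Real.log ((3/2 : ℝ) ^ (n + 1)) := by
      rw [Real.log_pow]
      rw [hL, div_lt_iff₀ hlog32] at hlt
      push_cast
      linarith
    have h1 : 0 < a := by linarith
    have h2 : 0 < (3/2 : ℝ) ^ (n + 1) := by positivity
    have := Real.exp_lt_exp.mpr hlog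
    rw [Real.exp_log h1, Real.exp_log h2] at this
    linarith
  have := key n t ht a ha ha2
  refine this.trans ?_
  have : (n : ℝ) + 1 ≤ 1 + L := by linarith
  nlinarith
end

section
/- Let L : M_n(ℂ) → M_n(ℂ) be linear with L(1) = 0, such that each T_t = e^{−tL} is a 2-positive, unital, trace-preserving map that is self-adjoint with respect to the trace inner product (tr(T_t(f)* g) = tr(f* T_t(g))). If f ∈ M_n(ℂ) satisfies T_t(f* f) = T_t(f)* T_t(f) for all t ≥ 0, then T_t f = f for all t ≥ 0. -/
open Matrix

attribute [local instance] Matrix.frobeniusNormedAddCommGroup Matrix.frobeniusNormedSpace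

/-- The matrix algebra `Mₙ(ℂ)` with the Frobenius norm. -/
noncomputable abbrev Msp18 (n : ℕ) := Matrix (Fin n) (Fin n) ℂ

/-- The semigroup `T_t = e^{−tL}` generated by `−L`. -/
noncomputable def Tsem18 {n : ℕ} (L : Msp18 n →L[ℂ] Msp18 n) (t : ℝ) : Msp18 n →L[ℂ] Msp18 n :=
  @NormedSpace.exp _ _ _ (by
    let R : NormedRing (Msp18 n →L[ℂ] Msp18 n) := ContinuousLinearMap.toNormedRing
    exact @NonUnitalSeminormedRing.toIsTopologicalRing _ R.toNonUnitalNormedRing.toNonUnitalSeminormedRing)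
    ((-(t : ℂ)) • L)

/-!
Self-adjointness, multiplicativity on `f` and trace preservation give
`tr(f* T_s f) = tr(T_{s/2}(f)* T_{s/2}(f)) = tr(T_{s/2}(f* f)) = tr(f* f)` for every `s ≥ 0`.
Used at `s = t` and `s = 2t`, this makes every term in the expansion of
`tr((T_t f - f)* (T_t f - f))` equal to `tr(f* f)`; the expansion vanishes, and definiteness
of the trace form gives `T_t f = f`.
-/

open scoped ComplexOrder

theorem NormedSpace.exp_add_smul {𝔸 : Type*} [NormedRing 𝔸] [NormedAlgebra ℂ 𝔸]
    [CompleteSpace 𝔸] (a b : ℂ) (x : 𝔸) :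
    exp ((a + b) • x) = exp (a • x) * exp (b • x) := by
  let _ : NormedAlgebra ℚ 𝔸 := NormedAlgebra.restrictScalars ℚ ℂ 𝔸
  rw [add_smul, exp_add_of_commute (((Commute.refl x).smul_left a).smul_right b)]

theorem Tsem18_add {n : ℕ} (L : Msp18 n →L[ℂ] Msp18 n) (s t : ℝ) :
    Tsem18 L (t + s) = Tsem18 L t * Tsem18 L s := by
  have h := @NormedSpace.exp_add_smul _ ContinuousLinearMap.toNormedRing
    ContinuousLinearMap.toNormedAlgebra (FiniteDimensional.complete ℂ _) (-t) (-s) L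
  rwa [← neg_add, ← Complex.ofReal_add] at h

theorem Matrix.eq_of_trace_conjTranspose_mul_eq {m n R : Type*} [Fintype m] [Fintype n]
    [PartialOrder R] [Ring R] [StarRing R] [StarOrderedRing R] [NoZeroDivisors R]
    {f g : Matrix m n R} (hfg : (fᴴ * g).trace = (fᴴ * f).trace)
    (hgf : (gᴴ * f).trace = (fᴴ * f).trace) (hgg : (gᴴ * g).trace = (fᴴ * f).trace) :
    g = f := by
  have hexpand : (g - f)ᴴ * (g - f) = gᴴ * g - gᴴ * f - (fᴴ * g - fᴴ * f) := by
    simp only [conjTranspose_sub, Matrix.sub_mul, Matrix.mul_sub]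
    abel
  rw [← sub_eq_zero, ← trace_conjTranspose_mul_self_eq_zero_iff, hexpand]
  simp only [trace_sub, hfg, hgf, hgg, sub_self]

section TraceSymmetricSemigroup

variable {m R : Type*} [Fintype m] [Ring R] [StarRing R] {T : ℝ → Matrix m m R → Matrix m m R}
  {f : Matrix m m R}

theorem trace_star_mul_apply_eq_of_map_star_mul_self
    (hT : ∀ s t, 0 ≤ s → 0 ≤ t → ∀ x, T t (T s x) = T (t + s) x)
    (htrace : ∀ t, 0 ≤ t → ∀ x, (T t x).trace = x.trace)
    (hsa : ∀ t, 0 ≤ t → ∀ x y, (star (T t x) * y).trace = (star x * T t y).trace)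
    (hf : ∀ t, 0 ≤ t → T t (star f * f) = star (T t f) * T t f)
    {s : ℝ} (hs : 0 ≤ s) :
    (star f * T s f).trace = (star f * f).trace := by
  have hs2 : 0 ≤ s / 2 := by positivity
  calc (star f * T s f).trace = (star f * T (s / 2) (T (s / 2) f)).trace := by
        rw [hT _ _ hs2 hs2, add_halves]
    _ = (star (T (s / 2) f) * T (s / 2) f).trace := (hsa _ hs2 _ _).symm
    _ = (T (s / 2) (star f * f)).trace := by rw [hf _ hs2]
    _ = (star f * f).trace := htrace _ hs2 _

theorem apply_eq_self_of_map_star_mul_self [PartialOrder R] [StarOrderedRing R]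
    [NoZeroDivisors R]
    (hT : ∀ s t, 0 ≤ s → 0 ≤ t → ∀ x, T t (T s x) = T (t + s) x)
    (htrace : ∀ t, 0 ≤ t → ∀ x, (T t x).trace = x.trace)
    (hsa : ∀ t, 0 ≤ t → ∀ x y, (star (T t x) * y).trace = (star x * T t y).trace)
    (hf : ∀ t, 0 ≤ t → T t (star f * f) = star (T t f) * T t f)
    {t : ℝ} (ht : 0 ≤ t) : T t f = f := by
  have key {s : ℝ} (hs : 0 ≤ s) :=
    trace_star_mul_apply_eq_of_map_star_mul_self hT htrace hsa hf hs
  refine Matrix.eq_of_trace_conjTranspose_mul_eq (key ht) ((hsa t ht f f).trans (key ht)) ?_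
  rw [← star_eq_conjTranspose, hsa t ht, hT t t ht ht]
  exact key (by positivity)

end TraceSymmetricSemigroup

theorem stmt18_general {n : ℕ} (L : Msp18 n →L[ℂ] Msp18 n)
    (htrace : ∀ t : ℝ, 0 ≤ t → ∀ x : Msp18 n, (Tsem18 L t x).trace = x.trace)
    (hsa : ∀ t : ℝ, 0 ≤ t → ∀ x y : Msp18 n,
      (star (Tsem18 L t x) * y).trace = (star x * Tsem18 L t y).trace)
    (f : Msp18 n)
    (hf : ∀ t : ℝ, 0 ≤ t → Tsem18 L t (star f * f) = star (Tsem18 L t f) * Tsem18 L t f) :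
    ∀ t : ℝ, 0 ≤ t → Tsem18 L t f = f := fun _ ht =>
  apply_eq_self_of_map_star_mul_self (T := fun t => Tsem18 L t)
    (fun s t _ _ x => by rw [Tsem18_add]; rfl) htrace hsa hf ht

/-- let `L : Mₙ(ℂ) → Mₙ(ℂ)` be linear with `L(1) = 0` such that each
`T_t = e^{−tL}` (for `t ≥ 0`) is unital, 2-positive, trace preserving and self-adjoint with
respect to the trace. If `T_t(f* f) = T_t(f)* T_t(f)` for all `t ≥ 0`, then `T_t f = f` for
all `t ≥ 0`. -/
theorem stmt18 {n : ℕ} (L : Msp18 n →L[ℂ] Msp18 n) (hL1 : L 1 = 0)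
    (hunital : ∀ t : ℝ, 0 ≤ t → Tsem18 L t 1 = 1)
    (h2pos : ∀ t : ℝ, 0 ≤ t → ∀ M : Matrix (Fin 2) (Fin 2) (Msp18 n),
      (∃ B : Matrix (Fin 2) (Fin 2) (Msp18 n), M = Bᴴ * B) →
      ∃ B : Matrix (Fin 2) (Fin 2) (Msp18 n), M.map (Tsem18 L t) = Bᴴ * B)
    (htrace : ∀ t : ℝ, 0 ≤ t → ∀ x : Msp18 n, (Tsem18 L t x).trace = x.trace)
    (hsa : ∀ t : ℝ, 0 ≤ t → ∀ x y : Msp18 n,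
      (star (Tsem18 L t x) * y).trace = (star x * Tsem18 L t y).trace)
    (f : Msp18 n)
    (hf : ∀ t : ℝ, 0 ≤ t → Tsem18 L t (star f * f) = star (Tsem18 L t f) * Tsem18 L t f) :
    ∀ t : ℝ, 0 ≤ t → Tsem18 L t f = f :=
  stmt18_general L htrace hsa f hf
end
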